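/- Let $n, s, k$ be positive integers with $s \ge 2$, $0 \le k \le n$, $n \ge 5k+7$ and $n \ge 2s+k$. If $s > 2$, then the signless Laplacian spectral radius of the graph $K_s \vee ((s+k-1)K_1 \cup K_{n-2s-k+1})$ is strictly less than the signless Laplacian spectral radius of the graph $K_2 \vee ((k+1)K_1 \cup K_{n-k-3})$. -/

import Mathlib

open Classical in
/-- The adjacency matrix of a simple graph, with real entries. -/
noncomputable def adjMat {V : Type} [Fintype V] (G : SimpleGraph V) : Matrix V V ℝ :=
  fun i j => if G.Adj i j then 1 else 0

/-- The largest real eigenvalue of a real matrix. -/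
noncomputable def maxEig {V : Type} [Fintype V] (M : Matrix V V ℝ) : ℝ :=
  sSup {t : ℝ | ∃ x : V → ℝ, x ≠ 0 ∧ M.mulVec x = t • x}

/-- The spectral radius (largest adjacency eigenvalue) of a graph. -/
noncomputable def specRad {V : Type} [Fintype V] (G : SimpleGraph V) : ℝ :=
  maxEig (adjMat G)

/-- The signless Laplacian matrix `Q(G) = D(G) + A(G)`. -/
noncomputable def qMat {V : Type} [Fintype V] [DecidableEq V] (G : SimpleGraph V) :
    Matrix V V ℝ :=
  Matrix.diagonal (fun v => ∑ w, adjMat G v w) + adjMat G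

/-- The signless Laplacian spectral radius of a graph. -/
noncomputable def qRad {V : Type} [Fintype V] [DecidableEq V] (G : SimpleGraph V) : ℝ :=
  maxEig (qMat G)

/-- The graph `K_s ∨ (a K_1 ∪ K_{n-s-a})` on vertex set `Fin n`:
the first `s` vertices form a clique joined to everything, the next `a` vertices are
independent, and the last `n - s - a` vertices form a clique. -/
def modelA (n s a : ℕ) : SimpleGraph (Fin n) where
  Adj i j := i ≠ j ∧ ((i : ℕ) < s ∨ (j : ℕ) < s ∨ (s + a ≤ (i : ℕ) ∧ s + a ≤ (j : ℕ)))
  symm := ⟨by rintro i j ⟨h1, h2⟩; exact ⟨h1.symm, by tauto⟩⟩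
  loopless := ⟨fun i h => h.1 rfl⟩

/-- The graph `s K_1 ∨ (a K_1 ∪ K_{n-s-a})` on vertex set `Fin n`:
the first `s` vertices are independent but joined to everything else, the next `a`
vertices are independent, and the last `n - s - a` vertices form a clique. -/
def modelB (n s a : ℕ) : SimpleGraph (Fin n) where
  Adj i j := i ≠ j ∧ (((i : ℕ) < s ∧ ¬ (j : ℕ) < s) ∨ ((j : ℕ) < s ∧ ¬ (i : ℕ) < s) ∨
    (s + a ≤ (i : ℕ) ∧ s + a ≤ (j : ℕ)))
  symm := ⟨by rintro i j ⟨h1, h2⟩; exact ⟨h1.symm, by tauto⟩⟩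
  loopless := ⟨fun i h => h.1 rfl⟩

/-- `M` is a matching of `G`: a set of pairwise disjoint edges of `G`. -/
def IsMatchingIn {V : Type} (G : SimpleGraph V) (M : Finset (Sym2 V)) : Prop :=
  (↑M : Set (Sym2 V)) ⊆ G.edgeSet ∧
    ∀ e ∈ M, ∀ f ∈ M, e ≠ f → ∀ v : V, ¬(v ∈ e ∧ v ∈ f)

/-- `H` is an `S(k)`-factor of `G`: a spanning subgraph of `G` each of whose connected
components is isomorphic to a star `K_{1,m}` with `1 ≤ m ≤ k`. -/
def IsSkFactor {V : Type} [Fintype V] (G H : SimpleGraph V) (k : ℕ) : Prop :=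
  H ≤ G ∧ ∀ c : H.ConnectedComponent, ∃ m : ℕ, 1 ≤ m ∧ m ≤ k ∧
    Nonempty ((H.induce c.supp) ≃g completeBipartiteGraph Unit (Fin m))

/-! The signless Laplacian of `K_s ∨ (a K_1 ∪ K_t)` maps vectors constant on the three parts to
vectors constant on the three parts, so both radii are estimated through this quotient.
For `K_2 ∨ ((k+1)K_1 ∪ K_{n-k-3})`, the Rayleigh quotient of the indicator vector of the clique
`K_{n-k-1}` gives `q ≥ 2(n-k-2) + 2(k+1)/(n-k-1)`. For `K_s ∨ ((s+k-1)K_1 ∪ K_{n-2s-k+1})` with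
`s ≥ 3`, a positive vector `y` constant on the parts satisfies `Q y ≤ c y` for
`c = 2(n-k-2) + (k+1)/(n-k-1)`, so `q ≤ c` by the Collatz–Wielandt bound. -/

open Matrix Module.End Finset

theorem LinearMap.IsSymmetric.exists_hasEigenvalue_rayleigh_le {E : Type*}
    [NormedAddCommGroup E] [InnerProductSpace ℝ E] [FiniteDimensional ℝ E] {T : E →ₗ[ℝ] E}
    (hT : T.IsSymmetric) {x : E} (hx : x ≠ 0) :
    ∃ μ, HasEigenvalue T μ ∧ inner ℝ (T x) x / ‖x‖ ^ 2 ≤ μ := by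
  have : Nontrivial E := ⟨⟨x, 0, hx⟩⟩
  let T' := LinearMap.toContinuousLinearMap T
  refine ⟨_, hT.hasEigenvalue_iSup_of_finiteDimensional, le_ciSup (f := fun x : {x : E // x ≠ 0} =>
    RCLike.re (inner ℝ (T x) (x : E)) / ‖(x : E)‖ ^ 2) ⟨‖T'‖, ?_⟩ ⟨x, hx⟩⟩
  rintro _ ⟨y, rfl⟩
  exact (le_abs_self _).trans (T'.rayleighQuotient_le_norm y)

section Spectral

variable {V : Type} [Fintype V]

theorem bddAbove_setOf_mulVec_eq_smul (M : Matrix V V ℝ) :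
    BddAbove {t : ℝ | ∃ x : V → ℝ, x ≠ 0 ∧ M *ᵥ x = t • x} := by
  classical
  refine (finite_hasEigenvalue (toLin' M)).bddAbove.mono ?_
  rintro t ⟨x, hx, hxt⟩
  exact hasEigenvalue_of_hasEigenvector ⟨mem_eigenspace_iff.2 (by simpa using hxt), hx⟩

theorem rayleigh_le_maxEig {M : Matrix V V ℝ} (hM : M.IsHermitian) {x : V → ℝ} (hx : x ≠ 0) :
    (x ⬝ᵥ M *ᵥ x) / (x ⬝ᵥ x) ≤ maxEig M := by
  classical
  obtain ⟨μ, hμ, hle⟩ := (isSymmetric_toEuclideanLin_iff.2 hM).exists_hasEigenvalue_rayleigh_le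
    (x := WithLp.toLp 2 x) (by simpa using hx)
  obtain ⟨v, hv⟩ := hμ.exists_hasEigenvector
  have hmem : μ ∈ {t : ℝ | ∃ x : V → ℝ, x ≠ 0 ∧ M *ᵥ x = t • x} :=
    ⟨WithLp.ofLp v, by simpa using hv.2,
      by simpa [toLpLin_apply] using congrArg WithLp.ofLp hv.apply_eq_smul⟩
  calc (x ⬝ᵥ M *ᵥ x) / (x ⬝ᵥ x)
      = inner ℝ (toEuclideanLin M (WithLp.toLp 2 x)) (WithLp.toLp 2 x) / ‖WithLp.toLp 2 x‖ ^ 2 := by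
        rw [← real_inner_self_eq_norm_sq, toLpLin_toLp, EuclideanSpace.inner_toLp_toLp,
          EuclideanSpace.inner_toLp_toLp, star_trivial, star_trivial, toLin'_apply]
    _ ≤ μ := hle
    _ ≤ maxEig M := le_csSup (bddAbove_setOf_mulVec_eq_smul M) hmem

theorem eigenvalue_le_of_mulVec_le {M : Matrix V V ℝ} (hM : ∀ i j, 0 ≤ M i j) {y : V → ℝ}
    (hy : ∀ i, 0 < y i) {c : ℝ} (hMy : ∀ i, (M *ᵥ y) i ≤ c * y i) {t : ℝ} {x : V → ℝ}
    (hx : x ≠ 0) (hxt : M *ᵥ x = t • x) : t ≤ c := by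
  obtain ⟨j, hj⟩ := Function.ne_iff.1 hx
  obtain ⟨i, -, hi⟩ := exists_max_image univ (fun i => |x i| / y i) ⟨j, mem_univ j⟩
  set r := |x i| / y i
  have hr : 0 < r := (div_pos (abs_pos.2 hj) (hy j)).trans_le (hi j (mem_univ j))
  have hxr : ∀ w, |x w| ≤ r * y w := fun w => (div_le_iff₀ (hy w)).1 (hi w (mem_univ w))
  have key : |t| * (r * y i) ≤ c * (r * y i) := calc
    |t| * (r * y i) = |(M *ᵥ x) i| := by
      rw [hxt, Pi.smul_apply, smul_eq_mul, abs_mul, div_mul_cancel₀ _ (hy i).ne']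
    _ ≤ ∑ w, M i w * |x w| := by
      simpa only [mulVec, dotProduct, abs_mul, abs_of_nonneg (hM i _)] using
        abs_sum_le_sum_abs (fun w => M i w * x w) univ
    _ ≤ ∑ w, M i w * (r * y w) :=
      sum_le_sum fun w _ => mul_le_mul_of_nonneg_left (hxr w) (hM i w)
    _ = r * (M *ᵥ y) i := by
      simp only [mulVec, dotProduct, mul_sum]
      exact sum_congr rfl fun w _ => by ring
    _ ≤ r * (c * y i) := by gcongr; exact hMy i
    _ = c * (r * y i) := by ring
  exact (le_abs_self t).trans (le_of_mul_le_mul_right key (mul_pos hr (hy i)))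

theorem maxEig_le_of_mulVec_le {M : Matrix V V ℝ} (hM : ∀ i j, 0 ≤ M i j) {y : V → ℝ}
    (hy : ∀ i, 0 < y i) {c : ℝ} (hc : 0 ≤ c) (hMy : ∀ i, (M *ᵥ y) i ≤ c * y i) :
    maxEig M ≤ c :=
  Real.sSup_le (fun _ ⟨_, hx, hxt⟩ => eigenvalue_le_of_mulVec_le hM hy hMy hx hxt) hc

end Spectral

section Graph

variable {V : Type} [Fintype V]

theorem adjMat_nonneg (G : SimpleGraph V) (i j : V) : 0 ≤ adjMat G i j := by
  unfold adjMat; split_ifs <;> norm_num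

theorem qMat_nonneg [DecidableEq V] (G : SimpleGraph V) (i j : V) : 0 ≤ qMat G i j := by
  rw [qMat, Matrix.add_apply, diagonal_apply]
  refine add_nonneg ?_ (adjMat_nonneg G i j)
  split_ifs
  exacts [sum_nonneg fun _ _ => adjMat_nonneg G _ _, le_rfl]

theorem qMat_isHermitian [DecidableEq V] (G : SimpleGraph V) : (qMat G).IsHermitian := by
  refine IsHermitian.add (isHermitian_diagonal _) ?_
  ext i j
  simp only [conjTranspose_apply, star_trivial, adjMat]
  rw [G.adj_comm]

end Graph

def blockVec (n s a : ℕ) (x y z : ℝ) : Fin n → ℝ :=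
  fun i => if (i : ℕ) < s then x else if (i : ℕ) < s + a then y else z

section BlockVec

variable {n s a t : ℕ}

theorem sum_blockVec (h : s + a + t = n) (x y z : ℝ) :
    ∑ i, blockVec n s a x y z i = s * x + a * y + t * z := by
  subst h
  simp [Fin.sum_univ_add, blockVec, add_assoc]

theorem dotProduct_blockVec (h : s + a + t = n) (x y z x' y' z' : ℝ) :
    blockVec n s a x y z ⬝ᵥ blockVec n s a x' y' z' =
      s * (x * x') + a * (y * y') + t * (z * z') := by
  rw [← sum_blockVec h, dotProduct]
  refine sum_congr rfl fun i _ => ?_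
  simp only [blockVec]
  split_ifs <;> rfl

theorem blockVec_pos {x y z : ℝ} (hx : 0 < x) (hy : 0 < y) (hz : 0 < z) (i : Fin n) :
    0 < blockVec n s a x y z i := by
  unfold blockVec; split_ifs <;> assumption

theorem blockVec_le_mul_blockVec {x y z x' y' z' c : ℝ} (hx : x ≤ c * x') (hy : y ≤ c * y')
    (hz : z ≤ c * z') (i : Fin n) :
    blockVec n s a x y z i ≤ c * blockVec n s a x' y' z' i := by
  unfold blockVec; split_ifs <;> assumption

theorem adjMat_modelA_mulVec_blockVec (h : s + a + t = n) (x y z : ℝ) (v : Fin n) :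
    (adjMat (modelA n s a) *ᵥ blockVec n s a x y z) v =
      blockVec n s a ((s - 1) * x + a * y + t * z) (s * x) (s * x + (t - 1) * z) v := by
  -- `g` agrees with `blockVec x y z` on the neighbours of `v` and vanishes on the other vertices
  -- except `v` itself.
  set g := blockVec n s a x (if (v : ℕ) < s then y else 0)
    (if (v : ℕ) < s ∨ s + a ≤ v then z else 0)
  have hterm : ∀ w, adjMat (modelA n s a) v w * blockVec n s a x y z w =
      g w - if w = v then g v else 0 := by
    intro w
    unfold adjMat
    split_ifs with hadj hwv hwv
    · exact absurd hwv hadj.ne.symm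
    · obtain ⟨-, hadj⟩ := hadj
      simp only [g, blockVec]
      split_ifs <;> first | (exfalso; omega) | ring
    · subst hwv; ring
    · have hnadj := not_or.1 (not_and.1 hadj (Ne.symm hwv))
      simp only [g, blockVec]
      split_ifs <;> first | (exfalso; omega) | ring
  rw [mulVec, dotProduct, sum_congr rfl fun w _ => hterm w, sum_sub_distrib, sum_blockVec h,
    sum_ite_eq' univ v, if_pos (mem_univ v)]
  simp only [g, blockVec]
  split_ifs <;> first | (exfalso; omega) | ring

end BlockVec

theorem qMat_modelA_mulVec_blockVec {n s a t : ℕ} (h : s + a + t = n) (x y z : ℝ) :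
    qMat (modelA n s a) *ᵥ blockVec n s a x y z =
      blockVec n s a ((n + s - 2) * x + a * y + t * z) (s * x + s * y)
        (s * x + (s + 2 * t - 2) * z) := by
  funext v
  have hdeg : ∑ w, adjMat (modelA n s a) v w =
      (adjMat (modelA n s a) *ᵥ blockVec n s a 1 1 1) v := by
    simp [mulVec, dotProduct, blockVec]
  have hn : (n : ℝ) = s + a + t := by exact_mod_cast h.symm
  rw [qMat, add_mulVec, Pi.add_apply, mulVec_diagonal, hdeg, adjMat_modelA_mulVec_blockVec h,
    adjMat_modelA_mulVec_blockVec h, hn]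
  simp only [blockVec]
  split_ifs <;> ring

theorem dominating_row_le (s k m : ℕ) (hs : 3 ≤ s) (h : 4 * k + 7 ≤ 2 * s + m) :
    (2 * s + m - 1 : ℝ) * ((3 * s + k + m - 2) * ((3 * s - 4) * (3 * s + 2 * m - 4)) +
        (s + k - 1) * ((3 * s - 4) * s) + (m + 1) * (s * (3 * s + 2 * m - 4))) ≤
      ((4 * s + 2 * m - 4) * (2 * s + m - 1) + (k + 1)) * ((3 * s - 4) * (3 * s + 2 * m - 4)) := by
  have hk : (0 : ℝ) ≤ k := k.cast_nonneg
  rcases Nat.eq_zero_or_pos m with rfl | hm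
  · -- `2s ≥ 4k + 7` gives `s ≥ 2k + 4` only over the integers, and the real relaxation fails.
    have he : (0 : ℝ) ≤ s - 2 * k - 4 := by
      have : 2 * k + 4 ≤ s := by omega
      rw [sub_sub, sub_nonneg]; exact_mod_cast this
    push_cast
    nlinarith [mul_nonneg hk he, mul_nonneg (mul_nonneg hk he) he,
      mul_nonneg (mul_nonneg he he) he, mul_nonneg (mul_nonneg hk hk) he, mul_nonneg he he,
      mul_nonneg hk hk, mul_nonneg (mul_nonneg hk hk) hk]
  · have hu : (0 : ℝ) ≤ s - 3 := by rw [sub_nonneg]; exact_mod_cast hs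
    have hm' : (0 : ℝ) ≤ m - 1 := by rw [sub_nonneg]; exact_mod_cast hm
    have hw : (0 : ℝ) ≤ 2 * s + m - 4 * k - 7 := by
      have : (4 * k + 7 : ℝ) ≤ 2 * s + m := by exact_mod_cast h
      linarith
    nlinarith [mul_nonneg hw hu, mul_nonneg hw hm', mul_nonneg hw hk,
      mul_nonneg (mul_nonneg hw hu) hu, mul_nonneg (mul_nonneg hw hu) hm',
      mul_nonneg (mul_nonneg hw hm') hm', mul_nonneg (mul_nonneg hw hu) hk,
      mul_nonneg (mul_nonneg hu hu) hm', mul_nonneg (mul_nonneg hu hm') hm', mul_nonneg hu hm',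
      mul_nonneg (mul_nonneg hm' hm') hm', mul_nonneg (mul_nonneg hu hu) hu, mul_nonneg hu hk,
      mul_nonneg hm' hk]

theorem qRad_modelA_le (n s k : ℕ) (hs : 3 ≤ s) (h1 : 5 * k + 7 ≤ n) (h2 : 2 * s + k ≤ n) :
    qRad (modelA n s (s + k - 1)) ≤ 2 * ((n : ℝ) - k - 2) + (k + 1) / ((n : ℝ) - k - 1) := by
  obtain ⟨m, rfl⟩ : ∃ m, n = 2 * s + k + m := ⟨n - (2 * s + k), by omega⟩
  have ha : ((s + k - 1 : ℕ) : ℝ) = s + k - 1 := by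
    rw [Nat.cast_sub (by omega)]; push_cast; ring
  have hS : (3 : ℝ) ≤ s := by exact_mod_cast hs
  have hm : (0 : ℝ) ≤ m := m.cast_nonneg
  have hN : (0 : ℝ) < 2 * s + m - 1 := by linarith
  have hD : (0 : ℝ) < 3 * s + 2 * m - 4 := by linarith
  have h34 : (0 : ℝ) < 3 * s - 4 := by linarith
  set c : ℝ := ((4 * s + 2 * m - 4) * (2 * s + m - 1) + (k + 1)) / (2 * s + m - 1) with hc_def
  have hc : 2 * (((2 * s + k + m : ℕ) : ℝ) - k - 2) +
      (k + 1) / (((2 * s + k + m : ℕ) : ℝ) - k - 1) = c := by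
    rw [hc_def, show ((2 * s + k + m : ℕ) : ℝ) - k - 1 = 2 * s + m - 1 by push_cast; ring]
    field_simp
    push_cast
    ring
  have hc0 : (4 * s + 2 * m - 4 : ℝ) ≤ c := by
    rw [le_div_iff₀ hN]; linarith [k.cast_nonneg (α := ℝ)]
  -- The last two coordinates make the rows of the independent set and of the clique hold with
  -- equality for `4s + 2m - 4 = 2(n-k-2)`; only the first row needs the slack `(k+1)/(n-k-1)`.
  set y := blockVec (2 * s + k + m) s (s + k - 1) ((3 * s - 4) * (3 * s + 2 * m - 4))
    ((3 * s - 4) * s) (s * (3 * s + 2 * m - 4))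
  have hy : ∀ i, 0 < y i := blockVec_pos (mul_pos h34 hD) (by positivity) (by positivity)
  rw [hc, qRad]
  refine maxEig_le_of_mulVec_le (qMat_nonneg _) hy (by linarith) fun i => ?_
  rw [qMat_modelA_mulVec_blockVec (t := m + 1) (by omega)]
  apply blockVec_le_mul_blockVec
  · rw [div_mul_eq_mul_div, le_div_iff₀ hN, ha]
    push_cast
    linarith [dominating_row_le s k m hs (by omega)]
  · calc _ = (4 * s + 2 * m - 4 : ℝ) * ((3 * s - 4) * s) := by ring
      _ ≤ _ := by gcongr
  · calc _ = (4 * s + 2 * m - 4 : ℝ) * (s * (3 * s + 2 * m - 4)) := by push_cast; ring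
      _ ≤ _ := by gcongr

theorem le_qRad_modelA_two (n k : ℕ) (h : k + 3 ≤ n) :
    2 * ((n : ℝ) - k - 2) + 2 * (k + 1) / ((n : ℝ) - k - 1) ≤ qRad (modelA n 2 (k + 1)) := by
  obtain ⟨t, rfl⟩ : ∃ t, n = 2 + (k + 1) + t := ⟨n - (k + 3), by omega⟩
  have hx : blockVec (2 + (k + 1) + t) 2 (k + 1) 1 0 1 ≠ 0 := fun h0 => by
    simpa [blockVec] using congrFun h0 ⟨0, by omega⟩
  have hR := rayleigh_le_maxEig (qMat_isHermitian (modelA _ 2 (k + 1))) hx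
  rw [qMat_modelA_mulVec_blockVec rfl, dotProduct_blockVec rfl, dotProduct_blockVec rfl] at hR
  rw [qRad]
  refine le_trans (le_of_eq ?_) hR
  have ht : (2 : ℝ) + t ≠ 0 := by positivity
  rw [show ((2 + (k + 1) + t : ℕ) : ℝ) - k - 1 = 2 + t by push_cast; ring]
  push_cast
  field_simp
  ring

theorem stmt_10_general (n s k : ℕ) (h1 : 5 * k + 7 ≤ n) (h2 : 2 * s + k ≤ n) (hs2 : 2 < s) :
    qRad (modelA n s (s + k - 1)) < qRad (modelA n 2 (k + 1)) := by
  have hk : (0 : ℝ) ≤ k := k.cast_nonneg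
  have hN : (0 : ℝ) < n - k - 1 := by
    have : (k : ℝ) + 7 ≤ n := by exact_mod_cast (by omega : k + 7 ≤ n)
    linarith
  calc qRad (modelA n s (s + k - 1)) ≤ 2 * ((n : ℝ) - k - 2) + (k + 1) / ((n : ℝ) - k - 1) :=
        qRad_modelA_le n s k hs2 h1 h2
    _ < 2 * ((n : ℝ) - k - 2) + 2 * (k + 1) / ((n : ℝ) - k - 1) := by gcongr; linarith
    _ ≤ qRad (modelA n 2 (k + 1)) := le_qRad_modelA_two n k (by omega)

/-- Lemma: for `n ≥ max{5k+7, 2s+k}`, `0 ≤ k ≤ n` and `s > 2`,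
`q(K_s ∨ ((s+k-1)K_1 ∪ K_{n-2s-k+1})) < q(K_2 ∨ ((k+1)K_1 ∪ K_{n-k-3}))`. -/
theorem stmt_10 (n s k : ℕ) (hn : 1 ≤ n) (hs : 2 ≤ s) (hkn : k ≤ n)
    (h1 : 5 * k + 7 ≤ n) (h2 : 2 * s + k ≤ n) (hs2 : 2 < s) :
    qRad (modelA n s (s + k - 1)) < qRad (modelA n 2 (k + 1)) :=
  stmt_10_general n s k h1 h2 hs2
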